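/- arXiv:1203.2003 — 13 statements merged into one kernel-verified Lean document; each statement's English description precedes it below -/
import Mathlib

section
/- Let F be a filter on ℕ with F ≤ Filter.cofinite and F.NeBot (representing a nontrivial admissible ideal I on ℕ). If a real sequence x : ℕ → ℝ is I-convergent to ℓ (Tendsto x F (𝓝 ℓ)), then there exists a strictly monotone map φ : ℕ → ℕ such that the subsequence x ∘ φ converges to ℓ in the ordinary sense (Tendsto (x ∘ φ) atTop (𝓝 ℓ)). (The sequential method I is subsequential.) -/
open Filter Topology

theorem Filter.Tendsto.exists_strictMono_tendsto_of_le_atTop {X : Type*} [TopologicalSpace X]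
    [FirstCountableTopology X] {F : Filter ℕ} [F.NeBot] (hF : F ≤ atTop) {x : ℕ → X} {ℓ : X}
    (h : Tendsto x F (𝓝 ℓ)) : ∃ φ : ℕ → ℕ, StrictMono φ ∧ Tendsto (x ∘ φ) atTop (𝓝 ℓ) :=
  (h.mapClusterPt.mono hF).tendsto_subseq

theorem ideal_method_subsequential (F : Filter ℕ) (hF : F ≤ Filter.cofinite) [F.NeBot]
    (x : ℕ → ℝ) (ℓ : ℝ) (h : Tendsto x F (𝓝 ℓ)) :
    ∃ φ : ℕ → ℕ, StrictMono φ ∧ Tendsto (x ∘ φ) atTop (𝓝 ℓ) :=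
  h.exists_strictMono_tendsto_of_le_atTop (Nat.cofinite_eq_atTop ▸ hF)
end

section
/- Let F be a filter on ℕ with F ≤ Filter.cofinite and F.NeBot (representing a nontrivial admissible ideal I on ℕ). A subset E of ℝ is sequentially compact (every sequence of points of E has a subsequence converging in the ordinary sense to a point of E) if and only if E is I-sequentially compact (every sequence of points of E has a subsequence that is I-convergent to a point of E). -/
open Filter Topology

theorem exists_strictMono_tendsto_atTop_of_tendsto {X : Type*} [TopologicalSpace X]
    [FirstCountableTopology X] {F : Filter ℕ} [F.NeBot] (hF : F ≤ atTop) {x : ℕ → X} {ℓ : X}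
    (hx : Tendsto x F (𝓝 ℓ)) : ∃ ψ : ℕ → ℕ, StrictMono ψ ∧ Tendsto (x ∘ ψ) atTop (𝓝 ℓ) :=
  (hx.mapClusterPt.mono hF).tendsto_subseq

theorem seq_compact_iff_ideal_seq_compact (F : Filter ℕ) (hF : F ≤ Filter.cofinite)
    [F.NeBot] (E : Set ℝ) :
    (∀ x : ℕ → ℝ, (∀ n, x n ∈ E) →
      ∃ φ : ℕ → ℕ, StrictMono φ ∧ ∃ ℓ ∈ E, Tendsto (x ∘ φ) atTop (𝓝 ℓ)) ↔
    (∀ x : ℕ → ℝ, (∀ n, x n ∈ E) →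
      ∃ φ : ℕ → ℕ, StrictMono φ ∧ ∃ ℓ ∈ E, Tendsto (x ∘ φ) F (𝓝 ℓ)) := by
  rw [Nat.cofinite_eq_atTop] at hF
  refine ⟨fun h x hx => ?_, fun h x hx => ?_⟩
  · obtain ⟨φ, hφ, ℓ, hℓE, hconv⟩ := h x hx
    exact ⟨φ, hφ, ℓ, hℓE, hconv.mono_left hF⟩
  · obtain ⟨φ, hφ, ℓ, hℓE, hconv⟩ := h x hx
    obtain ⟨ψ, hψ, hconv'⟩ := exists_strictMono_tendsto_atTop_of_tendsto hF hconv
    exact ⟨φ ∘ ψ, hφ.comp hψ, ℓ, hℓE, hconv'⟩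
end

section
/- Let F be a filter on ℕ with F ≤ Filter.cofinite and F.NeBot (representing a nontrivial admissible ideal I on ℕ), let E ⊆ ℝ, f : ℝ → ℝ, and x₀ ∈ E. If f is I-sequentially continuous at x₀ (for every sequence x : ℕ → ℝ of points of E, Tendsto x F (𝓝 x₀) implies Tendsto (f ∘ x) F (𝓝 (f x₀))), then f is continuous at x₀ within E in the ordinary sense (ContinuousWithinAt f E x₀). -/
/-! Along a nontrivial `F ≤ atTop`, convergence of `f ∘ x` to `f x₀` forces `f x₀` to be an
ordinary cluster point of the sequence `f ∘ x`. If `f` were discontinuous within `E` at `x₀`,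
first countability would give a sequence in `E` tending to `x₀` whose image stays outside a fixed
neighbourhood of `f x₀`, so `f x₀` could not be such a cluster point. -/

open Filter Topology

theorem continuousWithinAt_of_forall_seq_mapClusterPt {X Y : Type*} [TopologicalSpace X]
    [FirstCountableTopology X] [TopologicalSpace Y] {f : X → Y} {E : Set X} {x₀ : X}
    (h : ∀ x : ℕ → X, (∀ n, x n ∈ E) → Tendsto x atTop (𝓝 x₀) →
      MapClusterPt (f x₀) atTop (f ∘ x)) :
    ContinuousWithinAt f E x₀ := by
  by_contra hf
  obtain ⟨U, hU, hfreq⟩ := not_tendsto_iff_exists_frequently_notMem.mp hf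
  obtain ⟨x, hx, hxE⟩ := exists_seq_forall_of_frequently
    (hfreq.and_eventually self_mem_nhdsWithin)
  have hcluster := h x (fun n ↦ (hxE n).2) (hx.mono_right nhdsWithin_le_nhds)
  obtain ⟨n, hn⟩ := (hcluster.frequently hU).exists
  exact (hxE n).1 hn

theorem ideal_seq_continuous_implies_continuous_general (F : Filter ℕ) (hF : F ≤ Filter.cofinite)
    [F.NeBot] (E : Set ℝ) (f : ℝ → ℝ) (x₀ : ℝ)
    (h : ∀ x : ℕ → ℝ, (∀ n, x n ∈ E) → Tendsto x F (𝓝 x₀) →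
      Tendsto (f ∘ x) F (𝓝 (f x₀))) :
    ContinuousWithinAt f E x₀ := by
  rw [Nat.cofinite_eq_atTop] at hF
  refine continuousWithinAt_of_forall_seq_mapClusterPt fun x hxE hx ↦ ?_
  exact (h x hxE (hx.mono_left hF)).mapClusterPt.mono hF

theorem ideal_seq_continuous_implies_continuous (F : Filter ℕ) (hF : F ≤ Filter.cofinite)
    [F.NeBot] (E : Set ℝ) (f : ℝ → ℝ) (x₀ : ℝ) (hx₀ : x₀ ∈ E)
    (h : ∀ x : ℕ → ℝ, (∀ n, x n ∈ E) → Tendsto x F (𝓝 x₀) →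
      Tendsto (f ∘ x) F (𝓝 (f x₀))) :
    ContinuousWithinAt f E x₀ :=
  ideal_seq_continuous_implies_continuous_general F hF E f x₀ h
end

section
/- Let F be a filter on ℕ with F ≤ Filter.cofinite and F.NeBot (representing a nontrivial admissible ideal I on ℕ), let E ⊆ ℝ and f : ℝ → ℝ. If f is ward continuous on E (for every sequence x : ℕ → ℝ of points of E, if Tendsto (fun n => x (n+1) − x n) atTop (𝓝 0) then Tendsto (fun n => f (x (n+1)) − f (x n)) atTop (𝓝 0)), then f is I-sequentially continuous on E: for every x₀ ∈ E and every sequence x of points of E with Tendsto x F (𝓝 x₀), one has Tendsto (f ∘ x) F (𝓝 (f x₀)). -/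
/-!
Ward continuity already forces ordinary continuity on `E`: if `v → a` inside `E`, the sequence
`a, v 0, a, v 1, a, v 2, …` is quasi-Cauchy, so the differences of its image under `f`, among them
`f (v k) - f a`, tend to `0`. A function continuous on `E` preserves convergence along any filter,
in particular along the dual filter of an ideal.
-/

open Filter Topology

section WardContinuity

variable {X Y : Type*}

def IsQuasiCauchy [Sub X] [Zero X] [TopologicalSpace X] (x : ℕ → X) : Prop :=
  Tendsto (fun n => x (n + 1) - x n) atTop (𝓝 0)

def WardContinuousOn [Sub X] [Zero X] [TopologicalSpace X] [Sub Y] [Zero Y] [TopologicalSpace Y]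
    (f : X → Y) (s : Set X) : Prop :=
  ∀ x : ℕ → X, (∀ n, x n ∈ s) → IsQuasiCauchy x → IsQuasiCauchy (f ∘ x)

def interleave (a : X) (v : ℕ → X) (n : ℕ) : X :=
  if Even n then a else v (n / 2)

lemma interleave_two_mul (a : X) (v : ℕ → X) (k : ℕ) : interleave a v (2 * k) = a := by
  simp [interleave]

lemma interleave_two_mul_add_one (a : X) (v : ℕ → X) (k : ℕ) :
    interleave a v (2 * k + 1) = v k := by
  simp [interleave, Nat.mul_add_div]

lemma interleave_mem {s : Set X} {a : X} {v : ℕ → X} (ha : a ∈ s) (hv : ∀ n, v n ∈ s) (n : ℕ) :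
    interleave a v n ∈ s := by
  unfold interleave
  split_ifs
  exacts [ha, hv _]

lemma norm_interleave_succ_sub [SeminormedAddGroup X] (a : X) (v : ℕ → X) (n : ℕ) :
    ‖interleave a v (n + 1) - interleave a v n‖ = ‖v (n / 2) - a‖ := by
  rcases Nat.even_or_odd' n with ⟨k, rfl | rfl⟩
  · rw [interleave_two_mul_add_one, interleave_two_mul, Nat.mul_div_cancel_left k two_pos]
  · rw [show 2 * k + 1 + 1 = 2 * (k + 1) by ring, interleave_two_mul, interleave_two_mul_add_one,
      norm_sub_rev, Nat.mul_add_div two_pos, Nat.div_eq_of_lt one_lt_two, add_zero]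

lemma isQuasiCauchy_interleave [SeminormedAddCommGroup X] {a : X} {v : ℕ → X}
    (hv : Tendsto v atTop (𝓝 a)) : IsQuasiCauchy (interleave a v) := by
  have hdist : Tendsto (fun n => ‖v (n / 2) - a‖) atTop (𝓝 0) :=
    (tendsto_iff_norm_sub_tendsto_zero.1 hv).comp (Nat.tendsto_div_const_atTop two_ne_zero)
  exact squeeze_zero_norm (fun n => (norm_interleave_succ_sub a v n).le) hdist

variable [SeminormedAddCommGroup X] [AddGroup Y] [TopologicalSpace Y] [IsTopologicalAddGroup Y]
  {f : X → Y} {s : Set X} {a : X}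

lemma WardContinuousOn.tendsto_comp (hf : WardContinuousOn f s) (ha : a ∈ s) {v : ℕ → X}
    (hvs : ∀ n, v n ∈ s) (hv : Tendsto v atTop (𝓝 a)) : Tendsto (f ∘ v) atTop (𝓝 (f a)) := by
  have himage := hf _ (interleave_mem ha hvs) (isQuasiCauchy_interleave hv)
  have hodd : Tendsto (fun k => f (v k) - f a) atTop (𝓝 0) := by
    simpa only [Function.comp_def, id, interleave_two_mul_add_one, interleave_two_mul] using
      himage.comp (tendsto_id.const_mul_atTop' two_pos)
  exact tendsto_sub_nhds_zero_iff.1 hodd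

lemma WardContinuousOn.continuousWithinAt (hf : WardContinuousOn f s) (ha : a ∈ s) :
    ContinuousWithinAt f s a := by
  refine tendsto_iff_seq_tendsto.2 fun u hu => ?_
  obtain ⟨hua, hus⟩ := tendsto_nhdsWithin_iff.1 hu
  obtain ⟨N, hN⟩ := eventually_atTop.1 hus
  rw [← tendsto_add_atTop_iff_nat N]
  exact hf.tendsto_comp ha (fun n => hN _ (Nat.le_add_left N n))
    ((tendsto_add_atTop_iff_nat N).2 hua)

end WardContinuity

theorem ward_continuous_implies_ideal_seq_continuous_general (F : Filter ℕ)
    (E : Set ℝ) (f : ℝ → ℝ)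
    (h : ∀ x : ℕ → ℝ, (∀ n, x n ∈ E) →
      Tendsto (fun n => x (n + 1) - x n) atTop (𝓝 0) →
      Tendsto (fun n => f (x (n + 1)) - f (x n)) atTop (𝓝 0)) :
    ∀ x₀ ∈ E, ∀ x : ℕ → ℝ, (∀ n, x n ∈ E) → Tendsto x F (𝓝 x₀) →
      Tendsto (f ∘ x) F (𝓝 (f x₀)) := by
  intro x₀ hx₀ x hxE hx
  have hward : WardContinuousOn f E := h
  exact (hward.continuousWithinAt hx₀).tendsto.comp
    (tendsto_nhdsWithin_iff.2 ⟨hx, Eventually.of_forall hxE⟩)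

theorem ward_continuous_implies_ideal_seq_continuous (F : Filter ℕ)
    (hF : F ≤ Filter.cofinite) [F.NeBot] (E : Set ℝ) (f : ℝ → ℝ)
    (h : ∀ x : ℕ → ℝ, (∀ n, x n ∈ E) →
      Tendsto (fun n => x (n + 1) - x n) atTop (𝓝 0) →
      Tendsto (fun n => f (x (n + 1)) - f (x n)) atTop (𝓝 0)) :
    ∀ x₀ ∈ E, ∀ x : ℕ → ℝ, (∀ n, x n ∈ E) → Tendsto x F (𝓝 x₀) →
      Tendsto (f ∘ x) F (𝓝 (f x₀)) :=
  ward_continuous_implies_ideal_seq_continuous_general F E f h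
end

section
/- Let F be a filter on ℕ with F ≤ Filter.cofinite and F.NeBot (representing a nontrivial admissible ideal I on ℕ), let E ⊆ ℝ and f : ℝ → ℝ. If f is slowly oscillating continuous on E (for every sequence x : ℕ → ℝ of points of E that is slowly oscillating, the sequence f ∘ x is slowly oscillating), then f is I-sequentially continuous on E: for every x₀ ∈ E and every sequence x of points of E with Tendsto x F (𝓝 x₀), one has Tendsto (f ∘ x) F (𝓝 (f x₀)). -/
/-!
A slowly oscillating sequence has consecutive differences tending to 0, because
`n + 1 ≤ (1 + δ) * n` once `n ≥ 1 / δ`. Given `y → x₀` inside `E`, the interleaved sequence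
`x₀, y 0, x₀, y 1, …` still converges, hence is slowly oscillating, and so is its image under `f`;
its differences at even indices are `f (y k) - f x₀`, which therefore tend to 0. So `f` is
sequentially continuous within `E` at `x₀`, hence continuous within `E` at `x₀` (ℝ is first
countable), and continuity transports convergence along any filter.
-/

open Filter Topology

def SlowlyOscillating (x : ℕ → ℝ) : Prop :=
  ∀ ε > (0 : ℝ), ∃ δ > (0 : ℝ), ∃ N : ℕ, ∀ n m : ℕ,
    N ≤ n → n ≤ m → (m : ℝ) ≤ (1 + δ) * n → |x m - x n| < ε

theorem CauchySeq.slowlyOscillating {x : ℕ → ℝ} (hx : CauchySeq x) : SlowlyOscillating x := by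
  intro ε hε
  obtain ⟨N, hN⟩ := Metric.cauchySeq_iff.1 hx ε hε
  exact ⟨1, one_pos, N, fun n m hn hnm _ => hN m (hn.trans hnm) n hn⟩

theorem SlowlyOscillating.tendsto_sub_succ {x : ℕ → ℝ} (hx : SlowlyOscillating x) :
    Tendsto (fun n => x (n + 1) - x n) atTop (𝓝 0) := by
  rw [Metric.tendsto_atTop]
  intro ε hε
  obtain ⟨δ, hδ, N, hN⟩ := hx ε hε
  refine ⟨max N ⌈δ⁻¹⌉₊, fun n hn => ?_⟩
  have hδn : 1 ≤ δ * n :=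
    calc 1 = δ * δ⁻¹ := (mul_inv_cancel₀ hδ.ne').symm
      _ ≤ δ * n := mul_le_mul_of_nonneg_left (Nat.ceil_le.1 (le_of_max_le_right hn)) hδ.le
  rw [Real.dist_eq, sub_zero]
  exact hN n (n + 1) (le_of_max_le_left hn) n.le_succ (by push_cast; linarith)

theorem tendsto_ite_even {α : Type*} [TopologicalSpace α] {a : α} {y : ℕ → α}
    (hy : Tendsto y atTop (𝓝 a)) :
    Tendsto (fun n => if Even n then a else y (n / 2)) atTop (𝓝 a) :=
  (tendsto_const_nhds.mono_left inf_le_left).if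
    ((hy.comp (Nat.tendsto_div_const_atTop two_ne_zero)).mono_left inf_le_left)

theorem continuousWithinAt_of_seq_tendsto {X Y : Type*} [TopologicalSpace X]
    [FirstCountableTopology X] [TopologicalSpace Y] {f : X → Y} {s : Set X} {a : X} (ha : a ∈ s)
    (h : ∀ u : ℕ → X, (∀ n, u n ∈ s) → Tendsto u atTop (𝓝 a) → Tendsto (f ∘ u) atTop (𝓝 (f a))) :
    ContinuousWithinAt f s a := by
  rw [continuousWithinAt_iff_continuousAt_domRestrict f ha, ContinuousAt,
    tendsto_nhds_iff_seq_tendsto]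
  exact fun u hu => h (Subtype.val ∘ u) (fun n => (u n).2) (tendsto_subtype_rng.1 hu)

theorem tendsto_comp_of_slowlyOscillating_comp {E : Set ℝ} {f : ℝ → ℝ}
    (h : ∀ x : ℕ → ℝ, (∀ n, x n ∈ E) → SlowlyOscillating x → SlowlyOscillating (f ∘ x))
    {x₀ : ℝ} (hx₀ : x₀ ∈ E) {y : ℕ → ℝ} (hyE : ∀ n, y n ∈ E) (hy : Tendsto y atTop (𝓝 x₀)) :
    Tendsto (f ∘ y) atTop (𝓝 (f x₀)) := by
  set s : ℕ → ℝ := fun n => if Even n then x₀ else y (n / 2)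
  have hsE : ∀ n, s n ∈ E := fun n => by
    dsimp only [s]; split_ifs
    exacts [hx₀, hyE _]
  have hfs := (h s hsE (tendsto_ite_even hy).cauchySeq.slowlyOscillating).tendsto_sub_succ
  have hstep : (fun k => (f ∘ s) (2 * k + 1) - (f ∘ s) (2 * k)) = fun k => (f ∘ y) k - f x₀ := by
    funext k
    have hk : (2 * k + 1) / 2 = k := by omega
    simp [s, hk]
  rw [← tendsto_sub_nhds_zero_iff, ← hstep]
  exact hfs.comp (strictMono_mul_left_of_pos two_pos).tendsto_atTop

theorem slowly_oscillating_continuous_implies_ideal_seq_continuous_general (F : Filter ℕ)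
    (E : Set ℝ) (f : ℝ → ℝ)
    (h : ∀ x : ℕ → ℝ, (∀ n, x n ∈ E) → SlowlyOscillating x →
      SlowlyOscillating (f ∘ x)) :
    ∀ x₀ ∈ E, ∀ x : ℕ → ℝ, (∀ n, x n ∈ E) → Tendsto x F (𝓝 x₀) →
      Tendsto (f ∘ x) F (𝓝 (f x₀)) := by
  intro x₀ hx₀ x hxE hx
  have hcont : ContinuousWithinAt f E x₀ :=
    continuousWithinAt_of_seq_tendsto hx₀ fun _ hyE hy =>
      tendsto_comp_of_slowlyOscillating_comp h hx₀ hyE hy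
  exact hcont.tendsto.comp (tendsto_nhdsWithin_iff.2 ⟨hx, .of_forall hxE⟩)

theorem slowly_oscillating_continuous_implies_ideal_seq_continuous (F : Filter ℕ)
    (hF : F ≤ Filter.cofinite) [F.NeBot] (E : Set ℝ) (f : ℝ → ℝ)
    (h : ∀ x : ℕ → ℝ, (∀ n, x n ∈ E) → SlowlyOscillating x →
      SlowlyOscillating (f ∘ x)) :
    ∀ x₀ ∈ E, ∀ x : ℕ → ℝ, (∀ n, x n ∈ E) → Tendsto x F (𝓝 x₀) →
      Tendsto (f ∘ x) F (𝓝 (f x₀)) :=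
  slowly_oscillating_continuous_implies_ideal_seq_continuous_general F E f h
end

section
/- Let F be a filter on ℕ with F ≤ Filter.cofinite and F.NeBot (representing a nontrivial admissible ideal I on ℕ), let E ⊆ ℝ and f : ℝ → ℝ. If f is δ-ward continuous on E (for every sequence x : ℕ → ℝ of points of E that is δ-quasi-Cauchy, the sequence f ∘ x is δ-quasi-Cauchy), then f is I-sequentially continuous on E: for every x₀ ∈ E and every sequence x of points of E with Tendsto x F (𝓝 x₀), one has Tendsto (f ∘ x) F (𝓝 (f x₀)). -/
/-!
Interleave a sequence `y` in `E` converging to `a ∈ E` with the constant `a`: the resulting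
sequence `y 0, a, y 1, a, …` converges, so it is δ-quasi-Cauchy, hence so is its image under `f`.
At the odd indices the second difference of that image is `2 (f a - f (y (k + 1)))`, so
`f ∘ y → f a`. Thus `f` is sequentially, hence genuinely, continuous on `E`, and continuity
passes to convergence along any filter.
-/

open Filter Topology

section DeltaQuasiCauchy

variable {G H : Type*} [AddGroup G] [TopologicalSpace G] [AddCommGroup H] [TopologicalSpace H]

def IsDeltaQuasiCauchy (x : ℕ → G) : Prop :=
  Tendsto (fun n => (x (n + 2) - x (n + 1)) - (x (n + 1) - x n)) atTop (𝓝 0)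

def DeltaWardContinuousOn (f : G → H) (E : Set G) : Prop :=
  ∀ x : ℕ → G, (∀ n, x n ∈ E) → IsDeltaQuasiCauchy x → IsDeltaQuasiCauchy (f ∘ x)

theorem Filter.Tendsto.isDeltaQuasiCauchy [ContinuousSub G] {x : ℕ → G} {a : G}
    (hx : Tendsto x atTop (𝓝 a)) : IsDeltaQuasiCauchy x := by
  have hx₁ := hx.comp (tendsto_add_atTop_nat 1)
  have hx₂ := hx.comp (tendsto_add_atTop_nat 2)
  unfold IsDeltaQuasiCauchy
  simpa using (hx₂.sub hx₁).sub (hx₁.sub hx)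

theorem tendsto_interleave_const {α : Type*} [TopologicalSpace α] {y : ℕ → α} {a : α}
    (hy : Tendsto y atTop (𝓝 a)) :
    Tendsto (fun n => if Even n then y (n / 2) else a) atTop (𝓝 a) :=
  (hy.comp (Nat.tendsto_div_const_atTop two_ne_zero)).if' tendsto_const_nhds

theorem DeltaWardContinuousOn.tendsto_comp [ContinuousSub G] [Module ℝ H]
    [IsTopologicalAddGroup H] [ContinuousConstSMul ℝ H] {f : G → H} {E : Set G}
    (hf : DeltaWardContinuousOn f E) {a : G} (ha : a ∈ E) {y : ℕ → G} (hyE : ∀ n, y n ∈ E)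
    (hy : Tendsto y atTop (𝓝 a)) : Tendsto (f ∘ y) atTop (𝓝 (f a)) := by
  set z : ℕ → G := fun n => if Even n then y (n / 2) else a
  have hzE : ∀ n, z n ∈ E := fun n => by
    by_cases hn : Even n
    · simpa [z, hn] using hyE (n / 2)
    · simpa [z, hn] using ha
  have hfz := hf z hzE (tendsto_interleave_const hy).isDeltaQuasiCauchy
  have hodd : Tendsto (fun k : ℕ => 2 * k + 1) atTop atTop :=
    tendsto_atTop_atTop.2 fun b => ⟨b, fun k hk => by omega⟩
  have hfz_odd : (fun n => ((f ∘ z) (n + 2) - (f ∘ z) (n + 1)) - ((f ∘ z) (n + 1) - (f ∘ z) n))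
      ∘ (fun k : ℕ => 2 * k + 1) = fun k => (2 : ℝ) • (f a - f (y (k + 1))) := by
    funext k
    have h₁ : ¬Even (2 * k + 1) := by simp
    have h₂ : Even (2 * k + 1 + 1) := by simp [Nat.even_add_one]
    have h₃ : ¬Even (2 * k + 1 + 2) := by simp [Nat.even_add_one]
    have h₄ : (2 * k + 1 + 1) / 2 = k + 1 := by omega
    simp only [Function.comp, z, h₁, h₂, h₃, h₄, if_true, if_false, two_smul]
    abel
  have hdiff : Tendsto (fun k => f a - f (y (k + 1))) atTop (𝓝 0) := by
    have := (hfz.comp hodd).const_smul (2⁻¹ : ℝ)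
    rw [hfz_odd, smul_zero] at this
    simpa [smul_smul] using this
  have hshift : Tendsto (fun k => f (y (k + 1))) atTop (𝓝 (f a)) := by
    simpa using (tendsto_const_nhds (x := f a)).sub hdiff
  exact (tendsto_add_atTop_iff_nat 1).1 hshift

theorem DeltaWardContinuousOn.continuousOn [ContinuousSub G] [FirstCountableTopology G]
    [Module ℝ H] [IsTopologicalAddGroup H] [ContinuousConstSMul ℝ H]
    {f : G → H} {E : Set G} (hf : DeltaWardContinuousOn f E) : ContinuousOn f E := by
  rw [continuousOn_iff_continuous_domRestrict, continuous_iff_seqContinuous]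
  intro y a hy
  exact hf.tendsto_comp a.2 (fun n => (y n).2) (tendsto_subtype_rng.1 hy)

end DeltaQuasiCauchy

theorem delta_ward_continuous_implies_ideal_seq_continuous_general (F : Filter ℕ)
    (E : Set ℝ) (f : ℝ → ℝ)
    (h : ∀ x : ℕ → ℝ, (∀ n, x n ∈ E) →
      Tendsto (fun n => (x (n + 2) - x (n + 1)) - (x (n + 1) - x n)) atTop (𝓝 0) →
      Tendsto (fun n => (f (x (n + 2)) - f (x (n + 1))) - (f (x (n + 1)) - f (x n)))
        atTop (𝓝 0)) :
    ∀ x₀ ∈ E, ∀ x : ℕ → ℝ, (∀ n, x n ∈ E) → Tendsto x F (𝓝 x₀) →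
      Tendsto (f ∘ x) F (𝓝 (f x₀)) := by
  have hf : DeltaWardContinuousOn f E := h
  intro x₀ hx₀ x hxE hx
  exact (hf.continuousOn x₀ hx₀).tendsto.comp
    (tendsto_nhdsWithin_iff.2 ⟨hx, Eventually.of_forall hxE⟩)

theorem delta_ward_continuous_implies_ideal_seq_continuous (F : Filter ℕ)
    (hF : F ≤ Filter.cofinite) [F.NeBot] (E : Set ℝ) (f : ℝ → ℝ)
    (h : ∀ x : ℕ → ℝ, (∀ n, x n ∈ E) →
      Tendsto (fun n => (x (n + 2) - x (n + 1)) - (x (n + 1) - x n)) atTop (𝓝 0) →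
      Tendsto (fun n => (f (x (n + 2)) - f (x (n + 1))) - (f (x (n + 1)) - f (x n)))
        atTop (𝓝 0)) :
    ∀ x₀ ∈ E, ∀ x : ℕ → ℝ, (∀ n, x n ∈ E) → Tendsto x F (𝓝 x₀) →
      Tendsto (f ∘ x) F (𝓝 (f x₀)) :=
  delta_ward_continuous_implies_ideal_seq_continuous_general F E f h
end

section
/- Let F be a filter on ℕ with F ≤ Filter.cofinite and F.NeBot (representing a nontrivial admissible ideal I on ℕ). A subset E of ℝ is ward compact (every sequence of points of E has a quasi-Cauchy subsequence) if and only if E is I-ward compact (every sequence of points of E has an I-quasi-Cauchy subsequence). -/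
/-!
A bounded set is ward compact by Bolzano–Weierstrass: a convergent subsequence has consecutive
differences tending to `0`. Conversely, an unbounded set contains a sequence whose norms grow by
at least `1` at each step, so every subsequence has consecutive differences of norm at least `1`;
since `F` is a proper filter, no subsequence is `F`-quasi-Cauchy. Finally `F ≤ cofinite = atTop`
turns quasi-Cauchy into `F`-quasi-Cauchy.
-/

open Filter Topology Bornology

variable {α : Type*} [SeminormedAddCommGroup α]

def WardCompactAlong (l : Filter ℕ) (E : Set α) : Prop :=
  ∀ x : ℕ → α, (∀ n, x n ∈ E) → ∃ φ : ℕ → ℕ, StrictMono φ ∧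
    Tendsto (fun n => x (φ (n + 1)) - x (φ n)) l (𝓝 0)

theorem WardCompactAlong.mono {l l' : Filter ℕ} {E : Set α} (hl : l' ≤ l)
    (h : WardCompactAlong l E) : WardCompactAlong l' E := fun x hx =>
  let ⟨φ, hφ, hlim⟩ := h x hx
  ⟨φ, hφ, hlim.mono_left hl⟩

theorem wardCompactAlong_atTop_of_isBounded [ProperSpace α] {E : Set α} (hE : IsBounded E) :
    WardCompactAlong atTop E := by
  intro x hx
  obtain ⟨a, -, φ, hφ, hlim⟩ :=
    tendsto_subseq_of_bounded (hE.subset (Set.range_subset_iff.2 hx)) (Set.mem_range_self ·)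
  refine ⟨φ, hφ, ?_⟩
  simpa using (hlim.comp (tendsto_add_atTop_nat 1)).sub hlim

theorem exists_seq_norm_add_one_lt_of_not_isBounded {E : Set α} (hE : ¬IsBounded E) :
    ∃ y : ℕ → α, (∀ n, y n ∈ E) ∧ ∀ n, ‖y n‖ + 1 < ‖y (n + 1)‖ := by
  simp only [isBounded_iff_forall_norm_le, not_exists, not_forall, not_le] at hE
  choose f hfE hf using hE
  let y : ℕ → α := fun n => Nat.rec (f 0) (fun _ a => f (‖a‖ + 1)) n
  exact ⟨y, fun n => by cases n <;> exact hfE _, fun n => hf _⟩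

theorem one_le_norm_sub_of_norm_add_one_le {y : ℕ → α} (hy : ∀ n, ‖y n‖ + 1 ≤ ‖y (n + 1)‖)
    {a b : ℕ} (hab : a < b) : 1 ≤ ‖y b - y a‖ := by
  have hmono : Monotone fun n => ‖y n‖ - n :=
    monotone_nat_of_le_succ fun n => by push_cast; linarith [hy n]
  have hab' : (a : ℝ) + 1 ≤ b := by exact_mod_cast hab
  calc 1 ≤ ‖y b‖ - ‖y a‖ := by linarith [hmono hab.le]
    _ ≤ ‖y b - y a‖ := norm_sub_norm_le _ _

theorem WardCompactAlong.isBounded {l : Filter ℕ} [l.NeBot] {E : Set α}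
    (h : WardCompactAlong l E) : IsBounded E := by
  by_contra hE
  obtain ⟨y, hyE, hy⟩ := exists_seq_norm_add_one_lt_of_not_isBounded hE
  obtain ⟨φ, hφ, hlim⟩ := h y hyE
  obtain ⟨n, hn⟩ := (hlim.eventually (eventually_norm_sub_lt 0 one_pos)).exists
  have := one_le_norm_sub_of_norm_add_one_le (fun n => (hy n).le) (hφ n.lt_succ_self)
  rw [sub_zero] at hn
  linarith

theorem ward_compact_iff_ideal_ward_compact (F : Filter ℕ) (hF : F ≤ Filter.cofinite)
    [F.NeBot] (E : Set ℝ) :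
    (∀ x : ℕ → ℝ, (∀ n, x n ∈ E) → ∃ φ : ℕ → ℕ, StrictMono φ ∧
      Tendsto (fun n => x (φ (n + 1)) - x (φ n)) atTop (𝓝 0)) ↔
    (∀ x : ℕ → ℝ, (∀ n, x n ∈ E) → ∃ φ : ℕ → ℕ, StrictMono φ ∧
      Tendsto (fun n => x (φ (n + 1)) - x (φ n)) F (𝓝 0)) := by
  change WardCompactAlong atTop E ↔ WardCompactAlong F E
  exact ⟨.mono (Nat.cofinite_eq_atTop ▸ hF),
    fun h => wardCompactAlong_atTop_of_isBounded h.isBounded⟩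
end

section
/- Let F be a filter on ℕ with F ≤ Filter.cofinite and F.NeBot (representing a nontrivial admissible ideal I on ℕ). A subset E of ℝ is bounded (Bornology.IsBounded E) if and only if E is I-ward compact (every sequence of points of E has an I-quasi-Cauchy subsequence). -/
/-!
Bounded sets: by Bolzano–Weierstrass every sequence in a bounded set has a convergent
subsequence, whose successive differences tend to `0` along `atTop`, hence along any `F ≤ cofinite`.

Unbounded sets: pick points of `E` whose norms grow by more than `1` at each step. Any two
terms of any subsequence are then at distance more than `1`, so the successive differences never
lie in the unit ball, which no nontrivial filter allows.
-/

open Filter Topology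

def QuasiCauchy {G : Type*} [TopologicalSpace G] [Sub G] [Zero G] (l : Filter ℕ) (x : ℕ → G) :
    Prop :=
  Tendsto (fun n => x (n + 1) - x n) l (𝓝 0)

theorem QuasiCauchy.mono {G : Type*} [TopologicalSpace G] [Sub G] [Zero G] {l l' : Filter ℕ}
    {x : ℕ → G} (h : QuasiCauchy l x) (hl : l' ≤ l) : QuasiCauchy l' x :=
  Tendsto.mono_left h hl

theorem Filter.Tendsto.quasiCauchy_atTop {G : Type*} [TopologicalSpace G] [AddGroup G]
    [ContinuousSub G] {x : ℕ → G} {a : G} (h : Tendsto x atTop (𝓝 a)) : QuasiCauchy atTop x := by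
  simpa only [QuasiCauchy, sub_self, Function.comp_def] using
    (h.comp (tendsto_add_atTop_nat 1)).sub h

section SeminormedAddCommGroup

variable {G : Type*} [SeminormedAddCommGroup G]

theorem exists_strictMono_quasiCauchy_of_isBounded [ProperSpace G] {s : Set G}
    (hs : Bornology.IsBounded s) {x : ℕ → G} (hx : ∀ n, x n ∈ s) :
    ∃ φ : ℕ → ℕ, StrictMono φ ∧ QuasiCauchy atTop (x ∘ φ) := by
  obtain ⟨a, -, φ, hφ, hconv⟩ := tendsto_subseq_of_bounded hs hx
  exact ⟨φ, hφ, hconv.quasiCauchy_atTop⟩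

theorem exists_seq_norm_add_one_lt_of_not_isBounded_s10 {s : Set G}
    (hs : ¬Bornology.IsBounded s) :
    ∃ x : ℕ → G, (∀ n, x n ∈ s) ∧ ∀ n, ‖x n‖ + 1 < ‖x (n + 1)‖ := by
  have hbig : ∀ r : ℝ, ∃ y ∈ s, r + 1 < ‖y‖ := by
    rw [isBounded_iff_forall_norm_le] at hs
    push Not at hs
    exact fun r => hs (r + 1)
  choose f hfs hf using hbig
  refine ⟨fun n => (fun y => f ‖y‖)^[n] (f 0), fun n => ?_, fun n => ?_⟩
  · cases n <;> simp only [Function.iterate_zero_apply, Function.iterate_succ_apply', hfs]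
  · simp only [Function.iterate_succ_apply', hf]

theorem one_lt_norm_sub_of_norm_add_one_lt {x : ℕ → G} (hx : ∀ n, ‖x n‖ + 1 < ‖x (n + 1)‖)
    {m k : ℕ} (hmk : m < k) : 1 < ‖x k - x m‖ :=
  have hmono : Monotone fun n => ‖x n‖ :=
    (strictMono_nat_of_lt_succ fun n => (lt_add_one _).trans (hx n)).monotone
  calc 1 < ‖x k‖ - ‖x m‖ := by linarith [hx m, hmono (Nat.succ_le_of_lt hmk)]
    _ ≤ ‖x k - x m‖ := norm_sub_norm_le _ _

theorem not_quasiCauchy_comp_of_norm_add_one_lt {l : Filter ℕ} [l.NeBot] {x : ℕ → G}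
    (hx : ∀ n, ‖x n‖ + 1 < ‖x (n + 1)‖) {φ : ℕ → ℕ} (hφ : StrictMono φ) :
    ¬QuasiCauchy l (x ∘ φ) := by
  intro hq
  have hsmall : ∀ᶠ n in l, ‖x (φ (n + 1)) - x (φ n)‖ < 1 :=
    (tendsto_zero_iff_norm_tendsto_zero.1 hq).eventually (gt_mem_nhds one_pos)
  obtain ⟨n, hn⟩ := hsmall.exists
  exact hn.not_gt (one_lt_norm_sub_of_norm_add_one_lt hx (hφ n.lt_succ_self))

end SeminormedAddCommGroup

theorem bounded_iff_ideal_ward_compact (F : Filter ℕ) (hF : F ≤ Filter.cofinite)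
    [F.NeBot] (E : Set ℝ) :
    Bornology.IsBounded E ↔
    (∀ x : ℕ → ℝ, (∀ n, x n ∈ E) → ∃ φ : ℕ → ℕ, StrictMono φ ∧
      Tendsto (fun n => x (φ (n + 1)) - x (φ n)) F (𝓝 0)) := by
  constructor
  · intro hE x hx
    obtain ⟨φ, hφ, hq⟩ := exists_strictMono_quasiCauchy_of_isBounded hE hx
    exact ⟨φ, hφ, hq.mono (hF.trans_eq Nat.cofinite_eq_atTop)⟩
  · intro h
    by_contra hE
    obtain ⟨x, hxE, hx⟩ := exists_seq_norm_add_one_lt_of_not_isBounded_s10 hE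
    obtain ⟨φ, hφ, hq⟩ := h x hxE
    exact not_quasiCauchy_comp_of_norm_add_one_lt hx hφ hq
end

section
/- Let F be a filter on ℕ with F ≤ Filter.cofinite and F.NeBot (representing a nontrivial admissible ideal I on ℕ), let E ⊆ ℝ and f : ℝ → ℝ. If f is I-ward continuous on E (for every sequence x : ℕ → ℝ of points of E, if Tendsto (fun n => x (n+1) − x n) F (𝓝 0) then Tendsto (fun n => f (x (n+1)) − f (x n)) F (𝓝 0)), then f is continuous on E in the ordinary sense (ContinuousOn f E). -/
/-!
If `f` were discontinuous at `a ∈ E`, there would be `ε > 0` and points `x k ∈ E` converging to `a`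
with `dist (f (x k)) (f a) ≥ ε`. The interlaced sequence `x 0, a, x 1, a, …` lies in `E` and its
consecutive differences tend to `0` along `atTop = cofinite`, hence along `F ≤ cofinite`; but all
consecutive differences of its image under `f` are at least `ε`, which is impossible along a
nontrivial filter.
-/

open Filter Topology

def interlace {α : Type*} (x : ℕ → α) (a : α) (n : ℕ) : α :=
  if Even n then x (n / 2) else a

section Interlace

variable {α β : Type*} (x : ℕ → α) (a : α)

@[simp]
lemma interlace_two_mul (k : ℕ) : interlace x a (2 * k) = x k := by
  simp [interlace]

@[simp]
lemma interlace_two_mul_add_one (k : ℕ) : interlace x a (2 * k + 1) = a := by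
  simp [interlace]

lemma apply_interlace (f : α → β) (n : ℕ) :
    f (interlace x a n) = interlace (f ∘ x) (f a) n := by
  unfold interlace
  split_ifs <;> rfl

lemma interlace_mem {s : Set α} (hx : ∀ n, x n ∈ s) (ha : a ∈ s) (n : ℕ) :
    interlace x a n ∈ s := by
  unfold interlace
  split_ifs
  exacts [hx _, ha]

lemma dist_interlace_succ [PseudoMetricSpace α] (n : ℕ) :
    dist (interlace x a (n + 1)) (interlace x a n) = dist (x ((n + 1) / 2)) a := by
  obtain ⟨k, rfl | rfl⟩ := n.even_or_odd'
  · have hk : (2 * k + 1) / 2 = k := by omega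
    simp [hk, dist_comm]
  · have hk : 2 * k + 1 + 1 = 2 * (k + 1) := by ring
    simp [hk]

lemma tendsto_dist_interlace_succ [PseudoMetricSpace α] {x : ℕ → α} {a : α}
    (hx : Tendsto x atTop (𝓝 a)) :
    Tendsto (fun n => dist (interlace x a (n + 1)) (interlace x a n)) atTop (𝓝 0) := by
  have hhalf : Tendsto (fun n : ℕ => (n + 1) / 2) atTop atTop :=
    (Nat.tendsto_div_const_atTop two_ne_zero).comp (tendsto_add_atTop_nat 1)
  simpa only [dist_interlace_succ, Function.comp_def] using
    (tendsto_iff_dist_tendsto_zero.1 hx).comp hhalf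

end Interlace

lemma tendsto_sub_nhds_zero_iff_dist {ι E : Type*} [SeminormedAddCommGroup E] {l : Filter ι}
    {u v : ι → E} :
    Tendsto (fun i => u i - v i) l (𝓝 0) ↔ Tendsto (fun i => dist (u i) (v i)) l (𝓝 0) := by
  simp only [dist_eq_norm]
  exact tendsto_zero_iff_norm_tendsto_zero

lemma exists_seq_tendsto_le_dist_of_not_continuousWithinAt {X Y : Type*} [TopologicalSpace X]
    [FirstCountableTopology X] [PseudoMetricSpace Y] {f : X → Y} {s : Set X} {a : X}
    (hf : ¬ContinuousWithinAt f s a) :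
    ∃ ε > 0, ∃ x : ℕ → X, (∀ n, x n ∈ s) ∧ Tendsto x atTop (𝓝 a) ∧
      ∀ n, ε ≤ dist (f (x n)) (f a) := by
  rw [ContinuousWithinAt, Metric.tendsto_nhds] at hf
  push Not at hf
  obtain ⟨ε, hε, hfreq⟩ := hf
  rw [frequently_nhdsWithin_iff, frequently_iff_seq_forall] at hfreq
  obtain ⟨x, hxa, hx⟩ := hfreq
  exact ⟨ε, hε, x, fun n => (hx n).2, hxa, fun n => (hx n).1⟩

theorem ideal_ward_continuous_implies_continuousOn (F : Filter ℕ)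
    (hF : F ≤ Filter.cofinite) [F.NeBot] (E : Set ℝ) (f : ℝ → ℝ)
    (h : ∀ x : ℕ → ℝ, (∀ n, x n ∈ E) →
      Tendsto (fun n => x (n + 1) - x n) F (𝓝 0) →
      Tendsto (fun n => f (x (n + 1)) - f (x n)) F (𝓝 0)) :
    ContinuousOn f E := by
  intro a ha
  by_contra hfa
  obtain ⟨ε, hε, x, hxE, hxa, hfx⟩ :=
    exists_seq_tendsto_le_dist_of_not_continuousWithinAt hfa
  have hy : Tendsto (fun n => interlace x a (n + 1) - interlace x a n) F (𝓝 0) :=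
    tendsto_sub_nhds_zero_iff_dist.2 <| (tendsto_dist_interlace_succ hxa).mono_left <|
      hF.trans Nat.cofinite_eq_atTop.le
  have hfy := tendsto_sub_nhds_zero_iff_dist.1 (h _ (interlace_mem x a hxE ha) hy)
  obtain ⟨n, hn⟩ := (hfy.eventually (gt_mem_nhds hε)).exists
  rw [apply_interlace x a f, apply_interlace x a f, dist_interlace_succ] at hn
  exact hn.not_ge (hfx _)
end

section
/- Let F be a filter on ℕ with F ≤ Filter.cofinite and F.NeBot (representing a nontrivial admissible ideal I on ℕ), let E ⊆ ℝ and f : ℝ → ℝ. If f is I-ward continuous on E and E is I-ward compact, then the image f '' E is I-ward compact. -/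
open Filter Topology

theorem ideal_ward_continuous_image_of_ideal_ward_compact_general (F : Filter ℕ)
    (E : Set ℝ) (f : ℝ → ℝ)
    (hf : ∀ x : ℕ → ℝ, (∀ n, x n ∈ E) →
      Tendsto (fun n => x (n + 1) - x n) F (𝓝 0) →
      Tendsto (fun n => f (x (n + 1)) - f (x n)) F (𝓝 0))
    (hE : ∀ x : ℕ → ℝ, (∀ n, x n ∈ E) → ∃ φ : ℕ → ℕ, StrictMono φ ∧
      Tendsto (fun n => x (φ (n + 1)) - x (φ n)) F (𝓝 0)) :
    ∀ y : ℕ → ℝ, (∀ n, y n ∈ f '' E) → ∃ φ : ℕ → ℕ, StrictMono φ ∧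
      Tendsto (fun n => y (φ (n + 1)) - y (φ n)) F (𝓝 0) := by
  intro y hy
  choose x hxE hfx using hy
  obtain ⟨φ, hφ, hx_qc⟩ := hE x hxE
  refine ⟨φ, hφ, ?_⟩
  simpa only [hfx] using hf (fun n => x (φ n)) (fun n => hxE (φ n)) hx_qc

theorem ideal_ward_continuous_image_of_ideal_ward_compact (F : Filter ℕ)
    (hF : F ≤ Filter.cofinite) [F.NeBot] (E : Set ℝ) (f : ℝ → ℝ)
    (hf : ∀ x : ℕ → ℝ, (∀ n, x n ∈ E) →
      Tendsto (fun n => x (n + 1) - x n) F (𝓝 0) →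
      Tendsto (fun n => f (x (n + 1)) - f (x n)) F (𝓝 0))
    (hE : ∀ x : ℕ → ℝ, (∀ n, x n ∈ E) → ∃ φ : ℕ → ℕ, StrictMono φ ∧
      Tendsto (fun n => x (φ (n + 1)) - x (φ n)) F (𝓝 0)) :
    ∀ y : ℕ → ℝ, (∀ n, y n ∈ f '' E) → ∃ φ : ℕ → ℕ, StrictMono φ ∧
      Tendsto (fun n => y (φ (n + 1)) - y (φ n)) F (𝓝 0) :=
  ideal_ward_continuous_image_of_ideal_ward_compact_general F E f hf hE
end

section
/- Let F be a filter on ℕ with F ≤ Filter.cofinite and F.NeBot (representing a nontrivial admissible ideal I on ℕ), let E ⊆ ℝ and f : ℝ → ℝ. If f is I-ward continuous on E and E is bounded (Bornology.IsBounded E), then the image f '' E is bounded. -/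
/-!
If `f '' E` were unbounded, it would contain values `f (z n)`, `z n ∈ E`, that are pairwise at
distance at least `1`. By Bolzano–Weierstrass a subsequence of `z` converges, so its consecutive
differences tend to `0` along the cofinite filter and hence along `F`; ward continuity then forces
the consecutive differences of the images to tend to `0` along the nontrivial filter `F`, which
contradicts their separation.
-/

open Filter Topology Metric

theorem Metric.exists_seq_pairwise_le_dist_of_not_isBounded {α : Type*} [PseudoMetricSpace α]
    {s : Set α} (hs : ¬Bornology.IsBounded s) (r : ℝ) :
    ∃ u : ℕ → α, (∀ n, u n ∈ s) ∧ Pairwise fun m n => r ≤ dist (u m) (u n) := by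
  have avoid_balls : ∀ t : Set α, t.Finite → ∃ c, c ∈ s ∧ ∀ y ∈ t, c ∉ ball y r := by
    intro t ht
    have : ¬s ⊆ ⋃ y ∈ t, ball y r := fun hsub =>
      hs ((Bornology.isBounded_biUnion ht).2 (fun _ _ => isBounded_ball) |>.subset hsub)
    simpa [Set.not_subset] using this
  obtain ⟨u, hu⟩ := Set.seq_of_forall_finite_exists avoid_balls
  have far_from_earlier : ∀ m n, m < n → r ≤ dist (u n) (u m) := fun m n hmn =>
    not_lt.1 ((hu n).2 (u m) ⟨m, hmn, rfl⟩)
  refine ⟨u, fun n => (hu n).1, fun m n hmn => ?_⟩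
  rcases hmn.lt_or_gt with h | h
  · exact dist_comm (u n) (u m) ▸ far_from_earlier m n h
  · exact far_from_earlier n m h

theorem Filter.Tendsto.succ_sub_tendsto_zero {G : Type*} [TopologicalSpace G] [AddGroup G]
    [ContinuousSub G] {x : ℕ → G} {a : G} (hx : Tendsto x atTop (𝓝 a)) {F : Filter ℕ}
    (hF : F ≤ cofinite) : Tendsto (fun n => x (n + 1) - x n) F (𝓝 0) := by
  have h : Tendsto (fun n => x (n + 1) - x n) atTop (𝓝 (a - a)) :=
    (hx.comp (tendsto_add_atTop_nat 1)).sub hx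
  rw [sub_self, ← Nat.cofinite_eq_atTop] at h
  exact h.mono_left hF

theorem ideal_ward_continuous_image_of_bounded (F : Filter ℕ)
    (hF : F ≤ Filter.cofinite) [F.NeBot] (E : Set ℝ) (f : ℝ → ℝ)
    (hf : ∀ x : ℕ → ℝ, (∀ n, x n ∈ E) →
      Tendsto (fun n => x (n + 1) - x n) F (𝓝 0) →
      Tendsto (fun n => f (x (n + 1)) - f (x n)) F (𝓝 0))
    (hE : Bornology.IsBounded E) :
    Bornology.IsBounded (f '' E) := by
  by_contra hB
  obtain ⟨y, hy, hsep⟩ := exists_seq_pairwise_le_dist_of_not_isBounded hB 1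
  choose z hzE hfz using hy
  obtain ⟨a, -, φ, hφ, hlim⟩ := tendsto_subseq_of_bounded hE hzE
  have hjumps := hf (z ∘ φ) (fun n => hzE (φ n)) (hlim.succ_sub_tendsto_zero hF)
  obtain ⟨n, hn⟩ := (hjumps.eventually (ball_mem_nhds 0 one_pos)).exists
  have hfar := hsep (hφ.injective.ne n.succ_ne_self)
  simp only [Function.comp_apply, dist_zero_right, hfz] at hn hfar
  rw [dist_eq_norm] at hfar
  linarith
end

section
/- Let F be a filter on ℕ with F ≤ Filter.cofinite and F.NeBot (representing a nontrivial admissible ideal I on ℕ), let E ⊆ ℝ, and let (f_k : ℝ → ℝ) be a sequence of functions each of which is I-ward continuous on E. If (f_k) converges uniformly on E to a function f : ℝ → ℝ, then f is I-ward continuous on E. -/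
/-! The ε/3 argument: choose one `fk k` uniformly within ε/3 of `f` on `E`; along `F` its increments
`fk k (x (n + 1)) - fk k (x n)` are eventually below ε/3, so those of `f` are below ε. It is run
with entourages, reading `Tendsto (fun n => b n - a n) F (𝓝 0)` as the pairs `(a n, b n)` tending
to the uniformity. -/

open Filter Topology Uniformity

theorem tendsto_uniformity_iff_tendsto_sub_nhds_zero {κ G : Type*} [UniformSpace G] [AddGroup G]
    [IsUniformAddGroup G] {l : Filter κ} {a b : κ → G} :
    Tendsto (fun n => (a n, b n)) l (𝓤 G) ↔ Tendsto (fun n => b n - a n) l (𝓝 0) := by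
  rw [uniformity_eq_comap_nhds_zero G, tendsto_comap_iff]
  rfl

theorem TendstoUniformlyOn.tendsto_uniformity_comp {ι α β κ : Type*} [UniformSpace β]
    {F : ι → α → β} {f : α → β} {p : Filter ι} [p.NeBot] {E : Set α}
    (h : TendstoUniformlyOn F f p E) {l : Filter κ} {u v : κ → α}
    (hu : ∀ n, u n ∈ E) (hv : ∀ n, v n ∈ E)
    (hF : ∀ i, Tendsto (fun n => (F i (u n), F i (v n))) l (𝓤 β)) :
    Tendsto (fun n => (f (u n), f (v n))) l (𝓤 β) := by
  refine tendsto_iff_forall_eventually_mem.2 fun s hs => ?_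
  obtain ⟨t, ht, _, hts⟩ := comp_comp_symm_mem_uniformity_sets hs
  obtain ⟨i, hi⟩ := (h t ht).exists
  filter_upwards [(hF i).eventually_mem ht] with n hn
  exact hts ⟨F i (v n), ⟨F i (u n), hi _ (hu n), hn⟩, SetRel.symm t (hi _ (hv n))⟩

theorem uniform_limit_ideal_ward_continuous_general (F : Filter ℕ)
    (E : Set ℝ) (fk : ℕ → ℝ → ℝ) (f : ℝ → ℝ)
    (hfk : ∀ k, ∀ x : ℕ → ℝ, (∀ n, x n ∈ E) →
      Tendsto (fun n => x (n + 1) - x n) F (𝓝 0) →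
      Tendsto (fun n => fk k (x (n + 1)) - fk k (x n)) F (𝓝 0))
    (hconv : TendstoUniformlyOn fk f atTop E) :
    ∀ x : ℕ → ℝ, (∀ n, x n ∈ E) →
      Tendsto (fun n => x (n + 1) - x n) F (𝓝 0) →
      Tendsto (fun n => f (x (n + 1)) - f (x n)) F (𝓝 0) := by
  intro x hxE hx
  refine tendsto_uniformity_iff_tendsto_sub_nhds_zero.1 ?_
  exact hconv.tendsto_uniformity_comp hxE (fun n => hxE (n + 1)) fun k =>
    tendsto_uniformity_iff_tendsto_sub_nhds_zero.2 (hfk k x hxE hx)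

theorem uniform_limit_ideal_ward_continuous (F : Filter ℕ)
    (hF : F ≤ Filter.cofinite) [F.NeBot] (E : Set ℝ) (fk : ℕ → ℝ → ℝ) (f : ℝ → ℝ)
    (hfk : ∀ k, ∀ x : ℕ → ℝ, (∀ n, x n ∈ E) →
      Tendsto (fun n => x (n + 1) - x n) F (𝓝 0) →
      Tendsto (fun n => fk k (x (n + 1)) - fk k (x n)) F (𝓝 0))
    (hconv : TendstoUniformlyOn fk f atTop E) :
    ∀ x : ℕ → ℝ, (∀ n, x n ∈ E) →
      Tendsto (fun n => x (n + 1) - x n) F (𝓝 0) →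
      Tendsto (fun n => f (x (n + 1)) - f (x n)) F (𝓝 0) :=
  uniform_limit_ideal_ward_continuous_general F E fk f hfk hconv
end

section
/- Let F be a filter on ℕ with F ≤ Filter.cofinite and F.NeBot (representing a nontrivial admissible ideal I on ℕ) and let E ⊆ ℝ. The set of functions f : E → ℝ that are I-ward continuous on E is closed in the space of all functions E → ℝ equipped with the topology of uniform convergence (i.e., it is a closed subset of E →ᵤ ℝ). -/
/-!
Ward continuity along one sequence `x` says that `f ↦ (n ↦ f (x (n+1)) - f (x n))`, a continuous
map `(E →ᵤ ℝ) → (ℕ →ᵤ ℝ)`, lands in the set of functions tending to `0` along the filter; that set is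
closed because a uniform limit of functions with a limit along a filter has the same limit.
The set of ward continuous functions is the intersection of these closed preimages.
-/

open Filter Topology UniformConvergence

namespace UniformFun

theorem isClosed_setOf_tendsto {ι β : Type*} [UniformSpace β] (l : Filter ι) (y : β) :
    IsClosed {g : ι →ᵤ β | Tendsto (toFun g) l (𝓝 y)} := by
  refine isClosed_of_closure_subset fun g hg => ?_
  have := mem_closure_iff_nhdsWithin_neBot.mp hg
  have hlim : TendstoUniformly (fun h : ι →ᵤ β => toFun h) (toFun g)
      (𝓝[{g : ι →ᵤ β | Tendsto (toFun g) l (𝓝 y)}] g) :=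
    UniformFun.tendsto_iff_tendstoUniformly.mp nhdsWithin_le_nhds
  exact hlim.tendsto_of_eventually_tendsto self_mem_nhdsWithin tendsto_const_nhds

theorem continuous_ofFun_sub_comp {α ι G : Type*} [AddGroup G] [UniformSpace G]
    [IsUniformAddGroup G] (a b : ι → α) :
    Continuous fun f : α →ᵤ G => ofFun (fun i => toFun f (a i) - toFun f (b i)) :=
  (UniformFun.precomp_uniformContinuous (f := a)).continuous.sub
    (UniformFun.precomp_uniformContinuous (f := b)).continuous

theorem isClosed_setOf_tendsto_sub_comp {α ι G : Type*} [AddGroup G] [UniformSpace G]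
    [IsUniformAddGroup G] (l : Filter ι) (a b : ι → α) :
    IsClosed {f : α →ᵤ G | Tendsto (fun i => toFun f (a i) - toFun f (b i)) l (𝓝 0)} :=
  (isClosed_setOf_tendsto l 0).preimage (continuous_ofFun_sub_comp a b)

end UniformFun

theorem ideal_ward_continuous_isClosed_general (F : Filter ℕ) (E : Set ℝ) :
    IsClosed {f : E →ᵤ ℝ | ∀ x : ℕ → E,
      Tendsto (fun n => (x (n + 1) : ℝ) - (x n : ℝ)) F (𝓝 0) →
      Tendsto (fun n => UniformFun.toFun f (x (n + 1)) - UniformFun.toFun f (x n))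
        F (𝓝 0)} := by
  rw [Set.ofPred_forall]
  exact isClosed_iInter fun x => isClosed_imp isOpen_const
    (UniformFun.isClosed_setOf_tendsto_sub_comp F (fun n => x (n + 1)) x)

theorem ideal_ward_continuous_isClosed (F : Filter ℕ)
    (hF : F ≤ Filter.cofinite) [F.NeBot] (E : Set ℝ) :
    IsClosed {f : E →ᵤ ℝ | ∀ x : ℕ → E,
      Tendsto (fun n => (x (n + 1) : ℝ) - (x n : ℝ)) F (𝓝 0) →
      Tendsto (fun n => UniformFun.toFun f (x (n + 1)) - UniformFun.toFun f (x n))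
        F (𝓝 0)} :=
  ideal_ward_continuous_isClosed_general F E
end
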